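/- arXiv:1908.04129 — 4 statements merged into one kernel-verified Lean document; each statement's English description precedes it below -/
import Mathlib

section
/- Let F be the star forest F = K_{1,p_1} ∪ K_{1,p_2} ∪ … ∪ K_{1,p_t} with p_1 ≥ p_2 ≥ … ≥ p_t ≥ 1, and let s = max{i : 1 ≤ i ≤ t, p_i ≥ 2} (assume p_1 ≥ 2 so that s exists). Then for every i with 1 ≤ i ≤ s and every n ≥ i − 1 + Σ_{j=1}^{t}(p_j+1), one has ar(K_n, F) ≥ (i−1)n − C(i,2) + ⌊((p_i−2)/2)(n−i+1)⌋ + 1, where C(m,2) denotes the binomial coefficient m choose 2. -/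
open SimpleGraph Finset

/-- Number of colors used by an edge-coloring of the complete graph on `Fin n`. -/
noncomputable def colorCount {n : ℕ} (c : Sym2 (Fin n) → ℕ) : ℕ :=
  (c '' (⊤ : SimpleGraph (Fin n)).edgeSet).ncard

/-- The coloring `c` of `K_n` admits a rainbow copy of the graph `G`. -/
def HasRainbowCopy {α : Type*} {n : ℕ} (c : Sym2 (Fin n) → ℕ) (G : SimpleGraph α) : Prop :=
  ∃ f : α → Fin n, Function.Injective f ∧
    ∀ e₁ ∈ G.edgeSet, ∀ e₂ ∈ G.edgeSet, e₁ ≠ e₂ → c (Sym2.map f e₁) ≠ c (Sym2.map f e₂)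

/-- The anti-Ramsey number `ar(K_n, G)`: the maximum number of colors in an edge-coloring
of `K_n` with no rainbow copy of `G`. -/
noncomputable def antiRamsey (n : ℕ) {α : Type*} (G : SimpleGraph α) : ℕ :=
  sSup {m | ∃ c : Sym2 (Fin n) → ℕ, ¬ HasRainbowCopy c G ∧ colorCount c = m}

/-- The star forest `K_{1,p 0} ∪ ⋯ ∪ K_{1,p (t-1)}`; in component `i`, the vertex with
value `0` is the center of a star with `p i` leaves. -/
def starForest (t : ℕ) (p : Fin t → ℕ) : SimpleGraph (Σ i : Fin t, Fin (p i + 1)) where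
  Adj u v := u.1 = v.1 ∧ ((u.2.val = 0 ∧ v.2.val ≠ 0) ∨ (v.2.val = 0 ∧ u.2.val ≠ 0))
  symm := by
    constructor
    rintro u v ⟨h1, h2⟩
    exact ⟨h1.symm, h2.symm⟩
  loopless := by
    constructor
    rintro u ⟨-, h⟩
    rcases h with ⟨h1, h2⟩ | ⟨h1, h2⟩ <;> exact h2 h1

/-!
Write `a = i - 1`, `m = n - a` and `d = pᵢ - 2`. There is a graph `K` on `m` vertices of maximum
degree `d` with at least `⌊dm/2⌋` edges: a circulant graph with jumps `1, …, ⌊d/2⌋`, together with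
the matching `x ~ x + ⌈m/2⌉` when `d` is odd. Let `H` be the join of `K_a` with `K`, and colour the
edges of `H` with distinct colours and all remaining edges of `K_n` with one further colour. This
uses `C(n,2) - C(m,2) + e(K) + 1 ≥ (i-1)n - C(i,2) + ⌊dm/2⌋ + 1` colours. In a rainbow copy of
`F`, one of the `i` largest stars avoids the `a` vertices of `K_a`; at most one of its `pⱼ ≥ d + 2`
edges has the extra colour, so its centre has degree at least `d + 1` in `K`, a contradiction.
-/

open scoped Pointwise

namespace SimpleGraph

section Counting

variable {V : Type*} [Fintype V] [DecidableEq V]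

theorem card_edgeFinset_add_card_edgeFinset_compl (G : SimpleGraph V) [DecidableRel G.Adj] :
    #G.edgeFinset + #Gᶜ.edgeFinset = (Fintype.card V).choose 2 := by
  have h : Gᶜ.edgeFinset = (⊤ : SimpleGraph V).edgeFinset \ G.edgeFinset := by
    ext e
    induction e using Sym2.ind
    simp [compl_adj]
  rw [h, add_comm, card_sdiff_add_card_eq_card (edgeFinset_mono le_top),
    card_edgeFinset_top_eq_card_choose_two]

theorem card_edgeFinset_sup_of_disjoint {G H : SimpleGraph V} [DecidableRel G.Adj]
    [DecidableRel H.Adj] (h : Disjoint G H) :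
    #(G ⊔ H).edgeFinset = #G.edgeFinset + #H.edgeFinset := by
  rw [edgeFinset_sup, card_union_of_disjoint (disjoint_edgeFinset.mpr h)]

theorem exists_ne_not_adj_of_degree_lt (G : SimpleGraph V) [DecidableRel G.Adj] {v : V}
    (h : G.degree v + 1 < Fintype.card V) : ∃ w, w ≠ v ∧ ¬ G.Adj v w := by
  have hcard : #(G.neighborFinset v) < #({v}ᶜ : Finset V) := by
    rw [card_neighborFinset_eq_degree, card_compl, card_singleton]
    omega
  obtain ⟨w, hw, hvw⟩ := exists_mem_notMem_of_card_lt_card hcard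
  exact ⟨w, by simpa using hw, by simpa using hvw⟩

end Counting

section Circulant

variable {Γ : Type*} [AddGroup Γ] [Fintype Γ] [DecidableEq Γ] {s : Finset Γ}

theorem neighborFinset_circulantGraph (hs : (0 : Γ) ∉ s) (x : Γ) :
    (circulantGraph (s : Set Γ)).neighborFinset x = (s ∪ -s).map (addRightEmbedding x) := by
  ext y
  simp only [mem_neighborFinset, circulantGraph_adj, mem_map, mem_union, Finset.mem_neg',
    addRightEmbedding_apply, mem_coe]
  constructor
  · rintro ⟨-, h | h⟩
    · exact ⟨y - x, Or.inr (by rwa [neg_sub]), sub_add_cancel y x⟩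
    · exact ⟨y - x, Or.inl h, sub_add_cancel y x⟩
  · rintro ⟨g, hg, rfl⟩
    have hg0 : g ≠ 0 := by rintro rfl; simp_all
    refine ⟨fun h => hg0 ?_, ?_⟩
    · simpa using h
    · simpa [sub_add_eq_sub_sub, or_comm] using hg

theorem degree_circulantGraph (hs : (0 : Γ) ∉ s) (x : Γ) :
    (circulantGraph (s : Set Γ)).degree x = #(s ∪ -s) := by
  rw [← card_neighborFinset_eq_degree, neighborFinset_circulantGraph hs, card_map]

theorem card_edgeFinset_circulantGraph (hs : (0 : Γ) ∉ s) (hdisj : Disjoint s (-s)) :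
    #(circulantGraph (s : Set Γ)).edgeFinset = Fintype.card Γ * #s := by
  have h := sum_degrees_eq_twice_card_edges (circulantGraph (s : Set Γ))
  simp only [degree_circulantGraph hs, sum_const, card_univ, card_union_of_disjoint hdisj,
    card_neg, smul_eq_mul] at h
  linarith

end Circulant

section CompleteJoin

variable {V W : Type*}

/-- The join of `K`, placed on the range of `f`, with the complete graph on the rest of `V`. -/
def completeJoin (f : W ↪ V) (K : SimpleGraph W) : SimpleGraph V := ((Kᶜ).map f)ᶜ

theorem completeJoin_adj_apply (f : W ↪ V) (K : SimpleGraph W) {x y : W} :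
    (completeJoin f K).Adj (f x) (f y) ↔ K.Adj x y := by
  simp only [completeJoin, compl_adj, map_adj_apply, f.injective.ne_iff, not_and, not_not]
  exact ⟨fun ⟨hne, h⟩ => h hne, fun h => ⟨h.ne, fun _ => h⟩⟩

theorem completeJoin_ne_top (f : W ↪ V) {K : SimpleGraph W} (hK : K ≠ ⊤) :
    completeJoin f K ≠ ⊤ := by
  obtain ⟨x, y, hxy, hK⟩ : ∃ x y, x ≠ y ∧ ¬ K.Adj x y := by
    by_contra! h
    exact hK (eq_top_iff.mpr fun x y hxy => h x y hxy)
  intro h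
  exact hK ((completeJoin_adj_apply f K).mp (h ▸ f.injective.ne hxy))

theorem card_edgeFinset_completeJoin_add_card_edgeFinset_compl [Fintype V] [DecidableEq V]
    [Fintype W] [DecidableEq W] (f : W ↪ V) (K : SimpleGraph W) [DecidableRel K.Adj]
    [DecidableRel (completeJoin f K).Adj] :
    #(completeJoin f K).edgeFinset + #Kᶜ.edgeFinset = (Fintype.card V).choose 2 := by
  rw [← card_edgeFinset_map f, add_comm]
  convert card_edgeFinset_add_card_edgeFinset_compl ((Kᶜ).map f)
  rfl

end CompleteJoin

section NearRegular

variable {m k : ℕ}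

def shortJumps (m k : ℕ) : Finset (Fin m) := {δ | δ.val ∈ Icc 1 k}

theorem zero_notMem_shortJumps [NeZero m] : (0 : Fin m) ∉ shortJumps m k := by
  simp [shortJumps]

theorem card_shortJumps (h : k < m) : #(shortJumps m k) = k := by
  have : (shortJumps m k).map Fin.valEmbedding = Icc 1 k := by
    ext x
    simp only [shortJumps, mem_map, mem_filter, mem_univ, true_and, Fin.valEmbedding_apply,
      mem_Icc]
    exact ⟨by rintro ⟨y, hy, rfl⟩; exact hy, fun hx => ⟨⟨x, by omega⟩, hx, rfl⟩⟩
  rw [← card_map Fin.valEmbedding, this, Nat.card_Icc, Nat.add_sub_cancel]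

theorem disjoint_shortJumps_neg (h : 2 * k < m) : Disjoint (shortJumps m k) (-shortJumps m k) := by
  rw [Finset.disjoint_left]
  intro δ hδ hδ'
  rw [mem_neg'] at hδ'
  simp only [shortJumps, mem_filter, mem_univ, true_and, mem_Icc, Fin.val_neg'] at hδ hδ'
  rw [Nat.mod_eq_of_lt (by omega)] at hδ'
  omega

theorem degree_circulantGraph_shortJumps [NeZero m] (h : 2 * k < m) (x : Fin m) :
    (circulantGraph (shortJumps m k : Set (Fin m))).degree x = 2 * k := by
  rw [degree_circulantGraph zero_notMem_shortJumps, card_union_of_disjoint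
    (disjoint_shortJumps_neg h), card_neg, card_shortJumps (by omega), two_mul]

theorem card_edgeFinset_circulantGraph_shortJumps [NeZero m] (h : 2 * k < m) :
    #(circulantGraph (shortJumps m k : Set (Fin m))).edgeFinset = m * k := by
  have := card_edgeFinset_circulantGraph (zero_notMem_shortJumps (m := m) (k := k))
    (disjoint_shortJumps_neg h)
  rwa [Fintype.card_fin, card_shortJumps (by omega)] at this

def antipodalMatching (m : ℕ) : SimpleGraph (Fin m) where
  Adj x y := x.val + (m - m / 2) = y.val ∨ y.val + (m - m / 2) = x.val
  symm := ⟨fun _ _ h => h.symm⟩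
  loopless := ⟨fun x h => by have := x.isLt; omega⟩

@[simp]
theorem antipodalMatching_adj {x y : Fin m} :
    (antipodalMatching m).Adj x y ↔ x.val + (m - m / 2) = y.val ∨ y.val + (m - m / 2) = x.val :=
  Iff.rfl

instance (m : ℕ) : DecidableRel (antipodalMatching m).Adj :=
  fun _ _ => inferInstanceAs (Decidable (_ ∨ _))

theorem degree_antipodalMatching_le_one (x : Fin m) : (antipodalMatching m).degree x ≤ 1 := by
  rw [← card_neighborFinset_eq_degree, card_le_one]
  intro y hy z hz
  simp only [mem_neighborFinset, antipodalMatching_adj] at hy hz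
  have := x.isLt; have := y.isLt; have := z.isLt
  exact Fin.ext (by omega)

theorem half_le_card_edgeFinset_antipodalMatching (m : ℕ) :
    m / 2 ≤ #(antipodalMatching m).edgeFinset := by
  have hlt : ∀ j : Fin (m / 2), j.val + (m - m / 2) < m := fun j => by omega
  let e : Fin (m / 2) → Sym2 (Fin m) := fun j => s(⟨j, by omega⟩, ⟨j + (m - m / 2), hlt j⟩)
  calc m / 2 = #(univ.image e) := by
        rw [card_image_of_injective, card_univ, Fintype.card_fin]
        intro i j hij
        simp only [e, Sym2.eq_iff, Fin.mk.injEq] at hij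
        exact Fin.ext (by omega)
    _ ≤ _ := card_le_card fun x hx => by
        obtain ⟨j, -, rfl⟩ := mem_image.mp hx
        simp [e]

theorem sub_notMem_shortJumps_of_antipodal (h : 2 * k + 2 ≤ m) {x y : Fin m}
    (hxy : x.val + (m - m / 2) = y.val) : x - y ∉ shortJumps m k ∧ y - x ∉ shortJumps m k := by
  have hy := y.isLt
  simp only [shortJumps, mem_filter, mem_univ, true_and, mem_Icc, Fin.val_sub]
  rw [show m - y + x = m / 2 by omega, Nat.mod_eq_of_lt (by omega),
    show m - x + y = (m - m / 2) + m by omega, Nat.add_mod_right, Nat.mod_eq_of_lt (by omega)]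
  omega

theorem disjoint_circulantGraph_shortJumps_antipodalMatching [NeZero m] (h : 2 * k + 2 ≤ m) :
    Disjoint (circulantGraph (shortJumps m k : Set (Fin m))) (antipodalMatching m) := by
  rw [SimpleGraph.disjoint_left]
  rintro x y ⟨-, hC⟩ (hM | hM)
  · have := sub_notMem_shortJumps_of_antipodal h hM
    simp_all
  · have := sub_notMem_shortJumps_of_antipodal h hM
    simp_all

theorem exists_degree_le_and_le_card_edgeFinset {d : ℕ} (hdm : d < m) :
    ∃ (K : SimpleGraph (Fin m)) (_ : DecidableRel K.Adj),
      (∀ x, K.degree x ≤ d) ∧ d * m / 2 ≤ #K.edgeFinset := by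
  have : NeZero m := ⟨by omega⟩
  obtain ⟨k, rfl | rfl⟩ := Nat.even_or_odd' d
  · refine ⟨circulantGraph (shortJumps m k : Set (Fin m)), inferInstance,
      fun x => (degree_circulantGraph_shortJumps (by omega) x).le, ?_⟩
    rw [card_edgeFinset_circulantGraph_shortJumps (by omega)]
    exact Nat.div_le_of_le_mul (le_of_eq (by ring))
  · have hdisj := disjoint_circulantGraph_shortJumps_antipodalMatching (m := m) (k := k) (by omega)
    refine ⟨circulantGraph (shortJumps m k : Set (Fin m)) ⊔ antipodalMatching m, inferInstance,
      fun x => ?_, ?_⟩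
    · have hC := degree_circulantGraph_shortJumps (k := k) (by omega) x
      have hM := degree_antipodalMatching_le_one x
      rw [← card_neighborFinset_eq_degree] at hC hM ⊢
      rw [neighborFinset_sup]
      exact (card_union_le _ _).trans (by omega)
    · have hC := card_edgeFinset_circulantGraph_shortJumps (m := m) (k := k) (by omega)
      have hM := half_le_card_edgeFinset_antipodalMatching m
      calc (2 * k + 1) * m / 2 = m * k + m / 2 := by
            rw [show (2 * k + 1) * m = 2 * (m * k) + m by ring, Nat.mul_add_div two_pos]
        _ ≤ #(circulantGraph (shortJumps m k : Set (Fin m))).edgeFinset +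
            #(antipodalMatching m).edgeFinset := by omega
        _ = _ := by convert (card_edgeFinset_sup_of_disjoint hdisj).symm

end NearRegular

end SimpleGraph

section Coloring

variable {V : Type*} [Fintype V]

noncomputable def rainbowOn (H : SimpleGraph V) [DecidableRel H.Adj] (e : Sym2 V) : ℕ :=
  if e ∈ H.edgeSet then Fintype.equivFin (Sym2 V) e + 1 else 0

theorem colorCount_rainbowOn {n : ℕ} (H : SimpleGraph (Fin n)) [DecidableRel H.Adj]
    (hH : H ≠ ⊤) : colorCount (rainbowOn H) = #H.edgeFinset + 1 := by
  obtain ⟨u, v, huv, hH⟩ : ∃ u v, u ≠ v ∧ ¬ H.Adj u v := by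
    by_contra! h
    exact hH (eq_top_iff.mpr fun u v huv => h u v huv)
  have himage : rainbowOn H '' (⊤ : SimpleGraph (Fin n)).edgeSet =
      (fun e => (Fintype.equivFin _ e : ℕ) + 1) '' H.edgeSet ∪ {0} := by
    ext c
    simp only [Set.mem_image, Set.mem_union, Set.mem_singleton_iff, rainbowOn]
    constructor
    · rintro ⟨e, -, rfl⟩
      split_ifs with he
      exacts [Or.inl ⟨e, he, rfl⟩, Or.inr rfl]
    · rintro (⟨e, he, rfl⟩ | rfl)
      · exact ⟨e, edgeSet_mono le_top he, if_pos he⟩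
      · exact ⟨s(u, v), by simpa using huv, if_neg hH⟩
  have hinj : Function.Injective fun e : Sym2 (Fin n) => (Fintype.equivFin _ e : ℕ) + 1 :=
    fun e e' h => (Fintype.equivFin _).injective (Fin.ext (by simpa using h))
  rw [colorCount, himage,
    Set.ncard_union_eq (by simp) (H.edgeSet.toFinite.image _) (Set.finite_singleton 0),
    Set.ncard_image_of_injective _ hinj, Set.ncard_singleton, ← coe_edgeFinset,
    Set.ncard_coe_finset]

theorem colorCount_le_antiRamsey {n : ℕ} {α : Type*} {G : SimpleGraph α}
    {c : Sym2 (Fin n) → ℕ} (hc : ¬ HasRainbowCopy c G) : colorCount c ≤ antiRamsey n G := by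
  refine le_csSup ⟨Nat.card (Sym2 (Fin n)), ?_⟩ ⟨c, hc, rfl⟩
  rintro _ ⟨c', -, rfl⟩
  exact (Set.ncard_image_le (Set.toFinite _)).trans (Set.ncard_le_card _)

/-- The pairs outside `H` all have colour `0`, so a rainbow star has at most one of them. -/
theorem card_le_card_filter_adj_add_one (H : SimpleGraph V) [DecidableRel H.Adj] {ι : Type*}
    (v : V) (g : ι → V) (L : Finset ι) (hL : Set.InjOn (fun l => rainbowOn H s(v, g l)) L) :
    #L ≤ #{l ∈ L | H.Adj v (g l)} + 1 := by
  rw [← card_filter_add_card_filter_not (fun l => H.Adj v (g l))]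
  gcongr
  rw [card_le_one]
  intro l hl l' hl'
  simp only [mem_filter] at hl hl'
  exact hL hl.1 hl'.1 (by simp [rainbowOn, hl.2, hl'.2])

end Coloring

theorem exists_mem_forall_sigma_notMem {ι V : Type*} {β : ι → Type*} [DecidableEq ι]
    {f : (Σ j, β j) → V} (hf : Function.Injective f) (A : Finset V) (J : Finset ι)
    (h : #A < #J) : ∃ j ∈ J, ∀ b, f ⟨j, b⟩ ∉ A := by
  set P := A.preimage f hf.injOn
  have hP : #(P.image Sigma.fst) < #J := (card_image_le.trans
    (card_le_card_of_injOn f (fun x hx => by simpa [P] using hx) hf.injOn)).trans_lt h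
  obtain ⟨j, hj, hjP⟩ := exists_mem_notMem_of_card_lt_card hP
  exact ⟨j, hj, fun b hb => hjP (mem_image.mpr ⟨⟨j, b⟩, by simpa [P] using hb, rfl⟩)⟩

theorem starForest_adj_center {t : ℕ} {q : Fin t → ℕ} (j : Fin t) {l : Fin (q j + 1)}
    (hl : l ≠ 0) : (starForest t q).Adj ⟨j, 0⟩ ⟨j, l⟩ :=
  ⟨rfl, Or.inl ⟨rfl, fun h => hl (Fin.ext h)⟩⟩

theorem injOn_color_star {n t : ℕ} {q : Fin t → ℕ} {c : Sym2 (Fin n) → ℕ}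
    {f : (Σ j : Fin t, Fin (q j + 1)) → Fin n}
    (hf : ∀ e₁ ∈ (starForest t q).edgeSet, ∀ e₂ ∈ (starForest t q).edgeSet, e₁ ≠ e₂ →
      c (Sym2.map f e₁) ≠ c (Sym2.map f e₂)) (j : Fin t) :
    Set.InjOn (fun l => c s(f ⟨j, 0⟩, f ⟨j, l⟩)) {l | l ≠ 0} := by
  intro l hl l' hl' h
  by_contra hne
  refine hf s(⟨j, 0⟩, ⟨j, l⟩) (starForest_adj_center j hl) s(⟨j, 0⟩, ⟨j, l'⟩)
    (starForest_adj_center j hl') ?_ (by simpa using h)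
  exact fun heq => hne (by simpa using Sym2.congr_right.mp heq)

theorem not_hasRainbowCopy_starForest {n m d t : ℕ} {q : Fin t → ℕ} (emb : Fin m ↪ Fin n)
    (K : SimpleGraph (Fin m)) [DecidableRel K.Adj] [DecidableRel (completeJoin emb K).Adj]
    (hK : ∀ x, K.degree x ≤ d) (J : Finset (Fin t)) (hJ : n - m < #J)
    (hq : ∀ j ∈ J, d + 2 ≤ q j) :
    ¬ HasRainbowCopy (rainbowOn (completeJoin emb K)) (starForest t q) := by
  rintro ⟨f, hf, hrb⟩
  have hA : #(univ.map emb)ᶜ = n - m := by simp [card_compl]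
  obtain ⟨j, hj, hjB⟩ := exists_mem_forall_sigma_notMem hf _ J (hA ▸ hJ)
  choose y hy using fun l => by simpa using hjB l
  set L : Finset (Fin (q j + 1)) := {l | l ≠ 0}
  have hL : #L = q j := by simp [L, filter_ne', card_erase_of_mem]
  have hstar := card_le_card_filter_adj_add_one (completeJoin emb K) (f ⟨j, 0⟩)
    (fun l => f ⟨j, l⟩) L (by simpa [L] using injOn_color_star hrb j)
  have hnbr : #{l ∈ L | (completeJoin emb K).Adj (f ⟨j, 0⟩) (f ⟨j, l⟩)} ≤ K.degree (y 0) := by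
    rw [← card_neighborFinset_eq_degree]
    refine card_le_card_of_injOn y (fun l hl => ?_) (fun l _ l' _ h => ?_)
    · simp only [coe_filter, Set.mem_ofPred_eq, ← hy] at hl
      simpa using (completeJoin_adj_apply emb K).mp hl.2
    · have := congrArg emb h
      rw [hy, hy] at this
      simpa using hf this
  have := hq j hj
  have := hK (y 0)
  omega

theorem Nat.choose_two_add_sub_choose_two (a m : ℕ) :
    ((a + m).choose 2 : ℤ) - m.choose 2 = a * (a + m) - (a + 1).choose 2 := by
  have : ((a + m).choose 2 : ℚ) - m.choose 2 = a * (a + m) - (a + 1).choose 2 := by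
    simp only [Nat.cast_choose_two, Nat.cast_add, Nat.cast_one]
    ring
  exact_mod_cast this

theorem le_antiRamsey_starForest {a m d t : ℕ} {q : Fin t → ℕ} (hdm : d + 1 < m)
    (J : Finset (Fin t)) (hJ : a < #J) (hq : ∀ j ∈ J, d + 2 ≤ q j) :
    (a : ℤ) * (a + m) - (a + 1).choose 2 + (d : ℤ) * m / 2 + 1 ≤
      antiRamsey (a + m) (starForest t q) := by
  classical
  obtain ⟨K, _, hK, hKcard⟩ := exists_degree_le_and_le_card_edgeFinset (d := d) (m := m) (by omega)
  have hKtop : K ≠ ⊤ := by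
    have : NeZero m := ⟨by omega⟩
    obtain ⟨w, hw, hnadj⟩ := K.exists_ne_not_adj_of_degree_lt (v := 0)
      (by have := hK 0; simp only [Fintype.card_fin]; omega)
    rintro rfl
    exact hnadj hw.symm
  have hcolors := colorCount_le_antiRamsey
    (not_hasRainbowCopy_starForest (Fin.natAddEmb a) K hK J (by omega) hq)
  rw [colorCount_rainbowOn _ (completeJoin_ne_top _ hKtop)] at hcolors
  have hH := card_edgeFinset_completeJoin_add_card_edgeFinset_compl (Fin.natAddEmb a) K
  have hKc := card_edgeFinset_add_card_edgeFinset_compl K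
  have hchoose := Nat.choose_two_add_sub_choose_two a m
  simp only [Fintype.card_fin] at hH hKc
  zify at hcolors hH hKc hKcard
  linarith

theorem antiRamsey_starForest_lower_general (t : ℕ) (p : ℕ → ℕ) (s : ℕ)
    (hmono : ∀ i j, 1 ≤ i → i ≤ j → j ≤ t → p j ≤ p i)
    (hst : s ≤ t)
    (hsp : ∀ i, 1 ≤ i → i ≤ s → 2 ≤ p i)
    (i : ℕ) (hi1 : 1 ≤ i) (his : i ≤ s)
    (n : ℕ) (hn : i - 1 + ∑ j ∈ Finset.Icc 1 t, (p j + 1) ≤ n) :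
    ((i : ℤ) - 1) * n - (Nat.choose i 2 : ℤ) + ((p i : ℤ) - 2) * ((n : ℤ) - i + 1) / 2 + 1 ≤
      (antiRamsey n (starForest t (fun j => p (j.val + 1))) : ℤ) := by
  have hit : i ≤ t := his.trans hst
  have hpi : 2 ≤ p i := hsp i hi1 his
  have hstar : p i + 1 ≤ ∑ j ∈ Icc 1 t, (p j + 1) :=
    single_le_sum (f := fun j => p j + 1) (fun _ _ => Nat.zero_le _) (mem_Icc.mpr ⟨hi1, hit⟩)
  obtain ⟨a, rfl⟩ : ∃ a, i = a + 1 := ⟨i - 1, by omega⟩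
  obtain ⟨m, rfl⟩ : ∃ m, n = a + m := ⟨n - a, by omega⟩
  obtain ⟨d, hd⟩ : ∃ d, p (a + 1) = d + 2 := ⟨p (a + 1) - 2, by omega⟩
  have hlarge : ∀ j ∈ univ.map (Fin.castLEEmb hit), d + 2 ≤ p (j.val + 1) := by
    simp only [mem_map, mem_univ, true_and, Fin.castLEEmb_apply, forall_exists_index]
    rintro _ j rfl
    have := hmono (j + 1) (a + 1) (by omega) (by omega) hit
    simp only [Fin.val_castLE]
    omega
  have := le_antiRamsey_starForest (a := a) (m := m) (d := d) (by omega) _ (by simp) hlarge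
  rw [hd]
  push_cast
  rwa [add_sub_cancel_right, add_sub_cancel_right, show (a + m - (a + 1) + 1 : ℤ) = m by ring]

/-- **Lower bound for star forests.** For `F = K_{1,p₁} ∪ ⋯ ∪ K_{1,p_t}` (`p` 1-indexed)
with `p₁ ≥ p₂ ≥ ⋯ ≥ p_t ≥ 1`, `s = max{i : pᵢ ≥ 2}` (so `p₁ ≥ 2`), every `1 ≤ i ≤ s` and
every `n ≥ i - 1 + Σ_j (p_j + 1)`:
`ar(K_n, F) ≥ (i-1)n - C(i,2) + ⌊(pᵢ-2)/2·(n-i+1)⌋ + 1`. -/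
theorem antiRamsey_starForest_lower (t : ℕ) (ht : 1 ≤ t) (p : ℕ → ℕ) (s : ℕ)
    (hp1 : 2 ≤ p 1)
    (hmono : ∀ i j, 1 ≤ i → i ≤ j → j ≤ t → p j ≤ p i)
    (hplb : ∀ i, 1 ≤ i → i ≤ t → 1 ≤ p i)
    (hs1 : 1 ≤ s) (hst : s ≤ t)
    (hsp : ∀ i, 1 ≤ i → i ≤ s → 2 ≤ p i)
    (hsmax : ∀ i, s < i → i ≤ t → p i = 1)
    (i : ℕ) (hi1 : 1 ≤ i) (his : i ≤ s)
    (n : ℕ) (hn : i - 1 + ∑ j ∈ Finset.Icc 1 t, (p j + 1) ≤ n) :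
    ((i : ℤ) - 1) * n - (Nat.choose i 2 : ℤ) + ((p i : ℤ) - 2) * ((n : ℤ) - i + 1) / 2 + 1 ≤
      (antiRamsey n (starForest t (fun j => p (j.val + 1))) : ℤ) :=
  antiRamsey_starForest_lower_general t p s hmono hst hsp i hi1 his n hn
end

section
/- Let n ≥ 8. If an edge-coloring of K_n uses exactly 17 colors and K_n contains a rainbow copy of K_6 or a rainbow copy of K_6 minus one edge, then K_n contains a rainbow copy of 2P_4 (two vertex-disjoint paths on four vertices each). -/
/-!
Let `f` embed `K₆` minus the edge `01` rainbowly into `K_n`, with image `W`. For two vertices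
`a ≠ b` outside `W` and `t ∈ W` with `c(ab) ≠ c(b t)`, the path `a b t u` together with a path on
the other four vertices of `W` is a rainbow `2P₄`, provided the four edges inside `W` avoid `01`
and the (at most one) edge of `W` of color `c(ab)`, resp. `c(b t)`. Such edges exist because
`K₆` minus any three edges is Hamiltonian: start the cycle at `t` and drop two of its edges.
Otherwise every edge leaving `W` has one and the same color (here `n ≥ 8` gives two vertices
outside `W`), so at most `15 + 1 = 16` colors are used.
-/

open SimpleGraph Finset

/-- Two vertex-disjoint paths on four vertices: `2P₄`. -/
def twoP4 : SimpleGraph (Fin 2 × Fin 4) where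
  Adj u v := u.1 = v.1 ∧ (u.2.val + 1 = v.2.val ∨ v.2.val + 1 = u.2.val)
  symm := by
    constructor
    rintro u v ⟨h1, h2⟩
    exact ⟨h1.symm, h2.symm⟩
  loopless := by constructor; rintro u ⟨-, h⟩; omega

lemma Set.InjOn.exists_forall_eq_of_apply_eq {α β : Type*} [Nonempty α] {φ : α → β}
    {s : Set α} (h : Set.InjOn φ s) (y : β) : ∃ p, ∀ x ∈ s, φ x = y → x = p := by
  by_cases hy : ∃ p ∈ s, φ p = y
  · obtain ⟨p, hp, rfl⟩ := hy
    exact ⟨p, fun x hx hxp => h hx hp hxp⟩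
  · exact ⟨Classical.arbitrary α, fun x hx hxy => (hy ⟨x, hx, hxy⟩).elim⟩

lemma HasRainbowCopy.mono {α : Type*} {n : ℕ} {c : Sym2 (Fin n) → ℕ} {G H : SimpleGraph α}
    (hHG : H ≤ G) (h : HasRainbowCopy c G) : HasRainbowCopy c H :=
  let ⟨f, hf, hrainbow⟩ := h
  ⟨f, hf, fun e₁ h₁ e₂ h₂ => hrainbow e₁ (edgeSet_mono hHG h₁) e₂ (edgeSet_mono hHG h₂)⟩

lemma twoP4_edgeSet : twoP4.edgeSet = {s((0, 0), (0, 1)), s((0, 1), (0, 2)), s((0, 2), (0, 3)),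
    s((1, 0), (1, 1)), s((1, 1), (1, 2)), s((1, 2), (1, 3))} := by
  ext e
  induction e using Sym2.ind with | _ x y =>
  simp only [mem_edgeSet, twoP4, Set.mem_insert_iff, Set.mem_singleton_iff]
  revert x y
  decide

set_option maxHeartbeats 400000 in
lemma hasRainbowCopy_twoP4_of_nodup {n : ℕ} (c : Sym2 (Fin n) → ℕ)
    (a₀ a₁ a₂ a₃ b₀ b₁ b₂ b₃ : Fin n)
    (hv : [a₀, a₁, a₂, a₃, b₀, b₁, b₂, b₃].Nodup)
    (hc : [c s(a₀, a₁), c s(a₁, a₂), c s(a₂, a₃), c s(b₀, b₁), c s(b₁, b₂), c s(b₂, b₃)].Nodup) :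
    HasRainbowCopy c twoP4 := by
  simp only [List.nodup_cons, List.mem_cons, List.not_mem_nil, List.nodup_nil] at hv hc
  refine ⟨fun x => ![![a₀, a₁, a₂, a₃], ![b₀, b₁, b₂, b₃]] x.1 x.2, ?_, ?_⟩
  · rintro ⟨i, j⟩ ⟨i', j'⟩ h
    fin_cases i <;> fin_cases j <;> fin_cases i' <;> fin_cases j' <;> simp_all
  · simp only [twoP4_edgeSet, Set.mem_insert_iff, Set.mem_singleton_iff]
    rintro _ (rfl | rfl | rfl | rfl | rfl | rfl) _ (rfl | rfl | rfl | rfl | rfl | rfl) hne <;>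
      first | (simp_all; done) | exact Ne.symm (by simp_all)

set_option synthInstance.maxSize 100000 in
lemma exists_hamiltonian_cycle_avoiding (p q : Sym2 (Fin 6)) :
    ∃ z : Fin 6 → Fin 6, Function.Injective z ∧ ∀ i, s(z i, z (i + 1)) ∉ [s(0, 1), p, q] := by
  have search : ∀ p q : Sym2 (Fin 6),
      ∃ z₁, z₁ ≠ 0 ∧ s(0, z₁) ∉ [s(0, 1), p, q] ∧
      ∃ z₂, z₂ ≠ 0 ∧ z₂ ≠ z₁ ∧ s(z₁, z₂) ∉ [s(0, 1), p, q] ∧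
      ∃ z₃, z₃ ≠ 0 ∧ z₃ ≠ z₁ ∧ z₃ ≠ z₂ ∧ s(z₂, z₃) ∉ [s(0, 1), p, q] ∧
      ∃ z₄, z₄ ≠ 0 ∧ z₄ ≠ z₁ ∧ z₄ ≠ z₂ ∧ z₄ ≠ z₃ ∧ s(z₃, z₄) ∉ [s(0, 1), p, q] ∧
      ∃ z₅, z₅ ≠ 0 ∧ z₅ ≠ z₁ ∧ z₅ ≠ z₂ ∧ z₅ ≠ z₃ ∧ z₅ ≠ z₄ ∧ s(z₄, z₅) ∉ [s(0, 1), p, q] ∧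
        s(z₅, 0) ∉ [s(0, 1), p, q] := by
    decide +kernel
  obtain ⟨z₁, h₁, e₁, z₂, h₂, h₂₁, e₂, z₃, h₃, h₃₁, h₃₂, e₃, z₄, h₄, h₄₁, h₄₂, h₄₃, e₄,
    z₅, h₅, h₅₁, h₅₂, h₅₃, h₅₄, e₅, e₆⟩ := search p q
  refine ⟨![0, z₁, z₂, z₃, z₄, z₅], ?_, ?_⟩
  · rw [← List.nodup_ofFn]
    simp [List.ofFn_succ, List.nodup_cons, *, Ne.symm]
  · intro i
    fin_cases i <;> assumption

abbrev k6MinusEdge : SimpleGraph (Fin 6) := (⊤ : SimpleGraph (Fin 6)).deleteEdges {s(0, 1)}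

lemma exists_edge_and_path_avoiding (t : Fin 6) (p q : Sym2 (Fin 6)) :
    ∃ u v w x y : Fin 6, [t, u, v, w, x, y].Nodup ∧
      [s(t, u), s(v, w), s(w, x), s(x, y)].Nodup ∧
      ∀ e ∈ [s(t, u), s(v, w), s(w, x), s(x, y)], e ∈ k6MinusEdge.edgeSet ∧ e ≠ p ∧ e ≠ q := by
  have hverts : ∀ k : Fin 6, [k, k + 1, k + 2, k + 3, k + 4, k + 5].Nodup := by decide
  have hedges : ∀ k : Fin 6,
      [s(k, k + 1), s(k + 2, k + 3), s(k + 3, k + 4), s(k + 4, k + 5)].Nodup := by decide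
  obtain ⟨z, hz, havoid⟩ := exists_hamiltonian_cycle_avoiding p q
  have hstep : ∀ i j, i + 1 = j →
      s(z i, z j) ∈ k6MinusEdge.edgeSet ∧ s(z i, z j) ≠ p ∧ s(z i, z j) ≠ q := by
    rintro i _ rfl
    have := havoid i
    simp only [List.mem_cons, List.not_mem_nil, or_false, not_or] at this
    refine ⟨?_, this.2⟩
    rw [edgeSet_deleteEdges]
    exact ⟨hz.ne (by simp), this.1⟩
  obtain ⟨k, rfl⟩ := Finite.surjective_of_injective hz t
  refine ⟨z (k + 1), z (k + 2), z (k + 3), z (k + 4), z (k + 5), (hverts k).map hz,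
    (hedges k).map (Sym2.map.injective hz), ?_⟩
  simp only [List.mem_cons, List.not_mem_nil, or_false]
  rintro e (rfl | rfl | rfl | rfl) <;> exact hstep _ _ (by abel)

section RainbowCopy

variable {n : ℕ} {c : Sym2 (Fin n) → ℕ}

lemma hasRainbowCopy_twoP4_of_color_ne {f : Fin 6 → Fin n} (hf : Function.Injective f)
    (hrainbow : Set.InjOn (fun e => c (e.map f)) k6MinusEdge.edgeSet)
    {a b : Fin n} (ha : a ∉ Set.range f) (hb : b ∉ Set.range f) (hab : a ≠ b) (t : Fin 6)
    (hc : c s(a, b) ≠ c s(b, f t)) : HasRainbowCopy c twoP4 := by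
  obtain ⟨p, hp⟩ := hrainbow.exists_forall_eq_of_apply_eq (c s(a, b))
  obtain ⟨q, hq⟩ := hrainbow.exists_forall_eq_of_apply_eq (c s(b, f t))
  obtain ⟨u, v, w, x, y, hverts, hedges, havoid⟩ := exists_edge_and_path_avoiding t p q
  apply hasRainbowCopy_twoP4_of_nodup c a b (f t) (f u) (f v) (f w) (f x) (f y)
  · have hfa : ∀ i, a ≠ f i := fun i h => ha ⟨i, h.symm⟩
    have hfb : ∀ i, b ≠ f i := fun i h => hb ⟨i, h.symm⟩
    refine List.nodup_cons.2 ⟨?_, List.nodup_cons.2 ⟨?_, hverts.map hf⟩⟩ <;>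
      simp [hab, hfa, hfb]
  · show (c s(a, b) :: c s(b, f t) ::
      [s(t, u), s(v, w), s(w, x), s(x, y)].map fun e => c (e.map f)).Nodup
    refine List.nodup_cons.2 ⟨?_, List.nodup_cons.2 ⟨?_, ?_⟩⟩
    · rw [List.mem_cons, not_or]
      simp only [List.mem_map, not_exists, not_and]
      exact ⟨hc, fun e he hce => (havoid e he).2.1 (hp e (havoid e he).1 hce)⟩
    · simp only [List.mem_map, not_exists, not_and]
      exact fun e he hce => (havoid e he).2.2 (hq e (havoid e he).1 hce)
    · exact hedges.map_on fun e he e' he' => hrainbow (havoid e he).1 (havoid e' he').1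

end RainbowCopy

section Counting

variable {α : Type*} [Fintype α] {n : ℕ}

lemma exists_notMem_range_ne (f : α → Fin n) (hn : Fintype.card α + 2 ≤ n) (x : Fin n) :
    ∃ y ∉ Set.range f, y ≠ x := by
  classical
  have hcard : (insert x (univ.image f)).card < (univ : Finset (Fin n)).card := by
    calc (insert x (univ.image f)).card ≤ (univ.image f).card + 1 := card_insert_le _ _
      _ ≤ Fintype.card α + 1 := by gcongr; exact card_image_le
      _ < (univ : Finset (Fin n)).card := by simp only [card_univ, Fintype.card_fin]; omega
  obtain ⟨y, -, hy⟩ := exists_mem_notMem_of_card_lt_card hcard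
  simp only [mem_insert, mem_image, mem_univ, true_and, not_or, not_exists] at hy
  exact ⟨y, fun ⟨i, hi⟩ => hy.2 i hi, hy.1⟩

variable {c : Sym2 (Fin n) → ℕ} {f : α → Fin n}

lemma exists_color_of_forall_color_eq [Nonempty α] (hn : Fintype.card α + 2 ≤ n)
    (H : ∀ a b, a ∉ Set.range f → b ∉ Set.range f → a ≠ b → ∀ t, c s(b, f t) = c s(a, b)) :
    ∃ κ, ∀ x y, x ∉ Set.range f → x ≠ y → c s(x, y) = κ := by
  obtain ⟨t₀⟩ := ‹Nonempty α›
  obtain ⟨x₀, hx₀, -⟩ := exists_notMem_range_ne f hn (f t₀)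
  have hcross : ∀ x ∉ Set.range f, ∀ t, c s(x, f t) = c s(x₀, f t₀) := by
    intro x hx t
    rcases eq_or_ne x x₀ with rfl | hne
    · obtain ⟨y, hy, hyx⟩ := exists_notMem_range_ne f hn x
      rw [H y x hy hx hyx t, H y x hy hx hyx t₀]
    · rw [H x₀ x hx₀ hx hne.symm t, H x x₀ hx hx₀ hne t₀, Sym2.eq_swap]
  refine ⟨c s(x₀, f t₀), fun x y hx hxy => ?_⟩
  by_cases hy : y ∈ Set.range f
  · obtain ⟨t, rfl⟩ := hy
    exact hcross x hx t
  · rw [← H x y hx hy hxy t₀]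
    exact hcross y hy t₀

lemma colorCount_le_of_forall_color_eq {κ : ℕ}
    (hκ : ∀ x y, x ∉ Set.range f → x ≠ y → c s(x, y) = κ) :
    colorCount c ≤ (Fintype.card α).choose 2 + 1 := by
  classical
  set S : Finset ℕ := insert κ ((⊤ : SimpleGraph α).edgeFinset.image fun e => c (e.map f))
  have hsub : c '' (⊤ : SimpleGraph (Fin n)).edgeSet ⊆ S := by
    rintro _ ⟨e, he, rfl⟩
    induction e using Sym2.ind with | _ x y =>
    by_cases hx : x ∈ Set.range f
    · by_cases hy : y ∈ Set.range f
      · obtain ⟨⟨i, rfl⟩, ⟨j, rfl⟩⟩ := And.intro hx hy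
        refine mem_insert_of_mem (mem_image.2 ⟨s(i, j), ?_, rfl⟩)
        simpa using fun h : i = j => he (congrArg f h)
      · rw [Sym2.eq_swap, hκ y x hy (Ne.symm he)]
        exact mem_insert_self κ _
    · rw [hκ x y hx he]
      exact mem_insert_self κ _
  calc colorCount c ≤ (S : Set ℕ).ncard := Set.ncard_le_ncard hsub S.finite_toSet
    _ = S.card := Set.ncard_coe_finset S
    _ ≤ _ := (card_insert_le _ _).trans (by
      gcongr
      exact card_image_le.trans card_edgeFinset_top_eq_card_choose_two.le)

end Counting

/-- **Fact 1.** Let `n ≥ 8`. If an edge-coloring of `K_n` uses exactly 17 colors and there is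
a rainbow copy of `K₆` or of `K₆` minus one edge, then there is a rainbow copy of `2P₄`. -/
theorem rainbow_K6_imp_twoP4 (n : ℕ) (hn : 8 ≤ n) (c : Sym2 (Fin n) → ℕ)
    (hc : colorCount c = 17)
    (h6 : HasRainbowCopy c (⊤ : SimpleGraph (Fin 6)) ∨
      HasRainbowCopy c ((⊤ : SimpleGraph (Fin 6)).deleteEdges {s((0 : Fin 6), (1 : Fin 6))})) :
    HasRainbowCopy c twoP4 := by
  obtain ⟨f, hf, hrainbow⟩ : HasRainbowCopy c k6MinusEdge :=
    h6.elim (·.mono (deleteEdges_le _)) id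
  have hinj : Set.InjOn (fun e => c (e.map f)) k6MinusEdge.edgeSet :=
    fun e₁ h₁ e₂ h₂ h => not_not.1 fun hne => hrainbow e₁ h₁ e₂ h₂ hne h
  by_contra hno
  have H : ∀ a b, a ∉ Set.range f → b ∉ Set.range f → a ≠ b → ∀ t, c s(b, f t) = c s(a, b) :=
    fun a b ha hb hab t => by_contra fun h =>
      hno (hasRainbowCopy_twoP4_of_color_ne hf hinj ha hb hab t (Ne.symm h))
  obtain ⟨κ, hκ⟩ := exists_color_of_forall_color_eq (by simpa using hn) H
  have h16 : colorCount c ≤ 16 := by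
    simpa [Nat.choose] using colorCount_le_of_forall_color_eq hκ
  omega
end

section
/- Let the vertices of K_n be v_1, v_2, …, v_n and let 1 ≤ p_1 ≤ p_2 ≤ … ≤ p_n ≤ n/3. Then for every edge-coloring c of K_n such that for each i the number of distinct colors appearing on the edges incident to v_i is at most p_i, the total number of colors used by c is at most (Σ_{i=1}^{n} p_i − n)/2 + 1. -/
open SimpleGraph Finset

namespace ARAux

variable {n : ℕ}

/-- Vertex set of color class `k`. -/
def Vc (c : Sym2 (Fin n) → ℕ) (k : ℕ) : Finset (Fin n) :=
  univ.filter (fun v => ∃ u, u ≠ v ∧ c s(u, v) = k)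

/-- Set of used colors. -/
def usedC (c : Sym2 (Fin n) → ℕ) : Finset ℕ :=
  (univ : Finset (Fin n)).offDiag.image (fun q => c s(q.1, q.2))

/-- Colors at a vertex. -/
def colAt (c : Sym2 (Fin n) → ℕ) (v : Fin n) : Finset ℕ :=
  ((univ : Finset (Fin n)).erase v).image (fun j => c s(v, j))

lemma mem_Vc {c : Sym2 (Fin n) → ℕ} {k : ℕ} {v : Fin n} :
    v ∈ Vc c k ↔ ∃ u, u ≠ v ∧ c s(u, v) = k := by
  simp [Vc]

lemma mem_usedC {c : Sym2 (Fin n) → ℕ} {k : ℕ} :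
    k ∈ usedC c ↔ ∃ u v : Fin n, u ≠ v ∧ c s(u, v) = k := by
  constructor
  · intro h
    obtain ⟨q, hq, hck⟩ := Finset.mem_image.mp h
    rw [Finset.mem_offDiag] at hq
    exact ⟨q.1, q.2, hq.2.2, hck⟩
  · rintro ⟨u, v, huv, h⟩
    exact Finset.mem_image.mpr ⟨(u, v), Finset.mem_offDiag.mpr ⟨mem_univ _, mem_univ _, huv⟩, h⟩

lemma usedC_of_mem_Vc {c : Sym2 (Fin n) → ℕ} {k : ℕ} {v : Fin n} (h : v ∈ Vc c k) :
    k ∈ usedC c := by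
  obtain ⟨u, hu, he⟩ := mem_Vc.mp h
  exact mem_usedC.mpr ⟨u, v, hu, he⟩

lemma mem_colAt {c : Sym2 (Fin n) → ℕ} {v : Fin n} {k : ℕ} :
    k ∈ colAt c v ↔ v ∈ Vc c k := by
  rw [mem_Vc]
  constructor
  · intro h
    obtain ⟨u, hu, he⟩ := Finset.mem_image.mp h
    have : u ≠ v := (Finset.mem_erase.mp hu).1
    exact ⟨u, this, by rw [Sym2.eq_swap] at he; exact he⟩
  · rintro ⟨u, hu, he⟩
    exact Finset.mem_image.mpr ⟨u, Finset.mem_erase.mpr ⟨hu, mem_univ _⟩,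
      by rw [Sym2.eq_swap]; exact he⟩

lemma two_le_Vc_card {c : Sym2 (Fin n) → ℕ} {k : ℕ} (hk : k ∈ usedC c) :
    2 ≤ (Vc c k).card := by
  obtain ⟨u, v, huv, he⟩ := mem_usedC.mp hk
  have hu : u ∈ Vc c k := mem_Vc.mpr ⟨v, huv.symm, by rw [Sym2.eq_swap]; exact he⟩
  have hv : v ∈ Vc c k := mem_Vc.mpr ⟨u, huv, he⟩
  have hsub : ({u, v} : Finset (Fin n)) ⊆ Vc c k := by
    intro x hx
    rcases Finset.mem_insert.mp hx with h | h
    · exact h ▸ hu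
    · exact (Finset.mem_singleton.mp h) ▸ hv
  calc 2 = ({u, v} : Finset (Fin n)).card := (Finset.card_pair huv).symm
    _ ≤ _ := Finset.card_le_card hsub

lemma colorCount_eq (c : Sym2 (Fin n) → ℕ) : colorCount c = (usedC c).card := by
  have himg : c '' (⊤ : SimpleGraph (Fin n)).edgeSet = ↑(usedC c) := by
    ext k
    simp only [Set.mem_image, Finset.mem_coe, mem_usedC]
    constructor
    · rintro ⟨e, he, rfl⟩
      induction e with
      | _ u v => exact ⟨u, v, by simpa using he, rfl⟩
    · rintro ⟨u, v, huv, rfl⟩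
      exact ⟨s(u, v), by simp [huv], rfl⟩
  rw [colorCount, himg, Set.ncard_coe_finset]

lemma sum_colAt_card (c : Sym2 (Fin n) → ℕ) :
    ∑ v, (colAt c v).card = ∑ k ∈ usedC c, (Vc c k).card := by
  classical
  have h1 : ∀ v, colAt c v = (usedC c).filter (fun k => v ∈ Vc c k) := by
    intro v
    ext k
    simp only [Finset.mem_filter, mem_colAt]
    exact ⟨fun h => ⟨usedC_of_mem_Vc h, h⟩, fun h => h.2⟩
  calc ∑ v, (colAt c v).card
      = ∑ v, ∑ k ∈ usedC c, if v ∈ Vc c k then 1 else 0 := by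
        refine Finset.sum_congr rfl fun v _ => ?_
        rw [h1 v, Finset.card_filter]
    _ = ∑ k ∈ usedC c, ∑ v, if v ∈ Vc c k then 1 else 0 := Finset.sum_comm
    _ = ∑ k ∈ usedC c, (Vc c k).card := by
        refine Finset.sum_congr rfl fun k _ => ?_
        rw [← Finset.card_filter]
        congr 1
        simp

lemma mul_self_sub (a : ℕ) : a * a - a = a * (a - 1) := by
  cases a with
  | zero => rfl
  | succ b => rw [Nat.succ_sub_one, Nat.mul_succ, Nat.add_sub_cancel]

lemma offdiag_le (c : Sym2 (Fin n) → ℕ) :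
    n * (n - 1) ≤ ∑ k ∈ usedC c, (Vc c k).card * ((Vc c k).card - 1) := by
  classical
  have hpart : (univ : Finset (Fin n)).offDiag.card
      = ∑ k ∈ usedC c, ((univ : Finset (Fin n)).offDiag.filter
          (fun q => c s(q.1, q.2) = k)).card :=
    Finset.card_eq_sum_card_image _ _
  have hcard : (univ : Finset (Fin n)).offDiag.card = n * (n - 1) := by
    rw [Finset.offDiag_card, Finset.card_univ, Fintype.card_fin, mul_self_sub]
  rw [← hcard, hpart]
  refine Finset.sum_le_sum fun k hk => ?_
  have hsub : (univ : Finset (Fin n)).offDiag.filter (fun q => c s(q.1, q.2) = k)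
      ⊆ (Vc c k).offDiag := by
    rintro ⟨u, v⟩ hq
    rw [Finset.mem_filter, Finset.mem_offDiag] at hq
    obtain ⟨⟨-, -, huv⟩, he⟩ := hq
    refine Finset.mem_offDiag.mpr ⟨?_, ?_, huv⟩
    · exact mem_Vc.mpr ⟨v, huv.symm, by rw [Sym2.eq_swap]; exact he⟩
    · exact mem_Vc.mpr ⟨u, huv, he⟩
  calc _ ≤ (Vc c k).offDiag.card := Finset.card_le_card hsub
    _ = _ := by rw [Finset.offDiag_card, mul_self_sub]

/-- A "grown" set: reachable from an edge by repeatedly adding a vertex of a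
color class already meeting the set in at least two vertices. -/
inductive Grown (c : Sym2 (Fin n) → ℕ) : Finset (Fin n) → Prop
  | seed (u v : Fin n) (h : u ≠ v) : Grown c {u, v}
  | step (S : Finset (Fin n)) (x : Fin n) (k : ℕ) (hS : Grown c S) (hx : x ∉ S)
      (hxk : x ∈ Vc c k) (h2 : 2 ≤ (Vc c k ∩ S).card) : Grown c (insert x S)

lemma Grown.two_le {c : Sym2 (Fin n) → ℕ} {S : Finset (Fin n)} (h : Grown c S) :
    2 ≤ S.card := by
  induction h with
  | seed u v huv => rw [Finset.card_pair huv]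
  | step S x k hS hx hxk h2 ih =>
      rw [Finset.card_insert_of_notMem hx]; omega

lemma Grown.sum_ge {c : Sym2 (Fin n) → ℕ} {S : Finset (Fin n)} (h : Grown c S) :
    S.card - 2 ≤ ∑ k ∈ usedC c, ((Vc c k ∩ S).card - 2) := by
  induction h with
  | seed u v huv => simp [Finset.card_pair huv]
  | step S x k hS hx hxk h2 ih =>
      have hk : k ∈ usedC c := usedC_of_mem_Vc hxk
      have hlt : ∑ k' ∈ usedC c, ((Vc c k' ∩ S).card - 2)
          < ∑ k' ∈ usedC c, ((Vc c k' ∩ insert x S).card - 2) := by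
        refine Finset.sum_lt_sum (fun i _ => ?_) ⟨k, hk, ?_⟩
        · refine Nat.sub_le_sub_right (Finset.card_le_card ?_) 2
          exact Finset.inter_subset_inter Finset.Subset.rfl (Finset.subset_insert _ _)
        · have heq : Vc c k ∩ insert x S = insert x (Vc c k ∩ S) := by
            rw [Finset.inter_comm, Finset.insert_inter_of_mem hxk, Finset.inter_comm]
          have hxnot : x ∉ Vc c k ∩ S := fun hmem => hx (Finset.mem_inter.mp hmem).2
          rw [heq, Finset.card_insert_of_notMem hxnot]
          omega
      rw [Finset.card_insert_of_notMem hx]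
      have h2S := hS.two_le
      omega

/-- The key combinatorial estimate. -/
lemma key (c : Sym2 (Fin n) → ℕ) (p : Fin n → ℕ) (hpn : ∀ i, 3 * p i ≤ n)
    (hd : ∀ v, (colAt c v).card ≤ p v) :
    n - 2 ≤ ∑ k ∈ usedC c, ((Vc c k).card - 2) := by
  classical
  by_cases hcase : Grown c (univ : Finset (Fin n))
  · -- Case 1: a grown set reaches everything
    have h := hcase.sum_ge
    simpa [Finset.inter_univ, Finset.card_univ] using h
  · -- Case 2: every color class is small
    have hsmall : ∀ k ∈ usedC c, 3 * (Vc c k).card ≤ n := by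
      intro k hk
      obtain ⟨u, v, huv, he⟩ := mem_usedC.mp hk
      -- maximal grown set containing u, v
      set A : Finset (Finset (Fin n)) :=
        (univ : Finset (Finset (Fin n))).filter (fun S => Grown c S ∧ u ∈ S ∧ v ∈ S) with hA
      have hAne : A.Nonempty := by
        refine ⟨{u, v}, Finset.mem_filter.mpr ⟨mem_univ _, Grown.seed u v huv, ?_, ?_⟩⟩
        · exact Finset.mem_insert_self _ _
        · exact Finset.mem_insert_of_mem (Finset.mem_singleton_self _)
      obtain ⟨T, hTA, hTmax⟩ := Finset.exists_max_image A Finset.card hAne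
      rw [hA, Finset.mem_filter] at hTA
      obtain ⟨-, hTG, huT, hvT⟩ := hTA
      have hmax : ∀ T', Grown c T' → u ∈ T' → v ∈ T' → T'.card ≤ T.card := by
        intro T' h1 h2 h3
        exact hTmax T' (Finset.mem_filter.mpr ⟨mem_univ _, h1, h2, h3⟩)
      -- T is not everything
      have hTne : T ≠ univ := fun h => hcase (h ▸ hTG)
      obtain ⟨x, hxT⟩ : ∃ x, x ∉ T := by
        by_contra h
        push_neg at h
        exact hTne (Finset.eq_univ_iff_forall.mpr h)
      -- the color class is inside T
      have huVc : u ∈ Vc c k := mem_Vc.mpr ⟨v, huv.symm, by rw [Sym2.eq_swap]; exact he⟩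
      have hvVc : v ∈ Vc c k := mem_Vc.mpr ⟨u, huv, he⟩
      have h2T : 2 ≤ (Vc c k ∩ T).card := by
        have : ({u, v} : Finset (Fin n)) ⊆ Vc c k ∩ T := by
          intro y hy
          rcases Finset.mem_insert.mp hy with h | h
          · subst h; exact Finset.mem_inter.mpr ⟨huVc, huT⟩
          · rw [Finset.mem_singleton] at h; subst h; exact Finset.mem_inter.mpr ⟨hvVc, hvT⟩
        calc 2 = ({u, v} : Finset (Fin n)).card := (Finset.card_pair huv).symm
          _ ≤ _ := Finset.card_le_card this
      have hVcT : Vc c k ⊆ T := by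
        intro y hy
        by_contra hyT
        have : Grown c (insert y T) := Grown.step T y k hTG hyT hy h2T
        have hle := hmax _ this (Finset.mem_insert_of_mem huT) (Finset.mem_insert_of_mem hvT)
        rw [Finset.card_insert_of_notMem hyT] at hle
        omega
      -- edges from x to T are rainbow
      have hinj : Set.InjOn (fun w => c s(x, w)) ↑T := by
        intro w hw w' hw' heq
        by_contra hne
        set k' := c s(x, w) with hk'
        have hwVc : w ∈ Vc c k' := mem_Vc.mpr ⟨x, fun hxw => hxT (hxw ▸ hw), rfl⟩
        have hw'Vc : w' ∈ Vc c k' := mem_Vc.mpr ⟨x, fun hxw => hxT (hxw ▸ hw'), heq.symm⟩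
        have hxVc : x ∈ Vc c k' := mem_Vc.mpr ⟨w, fun hwx => hxT (hwx ▸ hw),
          by rw [Sym2.eq_swap]⟩
        have h2' : 2 ≤ (Vc c k' ∩ T).card := by
          have hsub : ({w, w'} : Finset (Fin n)) ⊆ Vc c k' ∩ T := by
            intro y hy
            rcases Finset.mem_insert.mp hy with h | h
            · subst h; exact Finset.mem_inter.mpr ⟨hwVc, hw⟩
            · rw [Finset.mem_singleton] at h; subst h; exact Finset.mem_inter.mpr ⟨hw'Vc, hw'⟩
          calc 2 = ({w, w'} : Finset (Fin n)).card := (Finset.card_pair hne).symm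
            _ ≤ _ := Finset.card_le_card hsub
        have : Grown c (insert x T) := Grown.step T x k' hTG hxT hxVc h2'
        have hle := hmax _ this (Finset.mem_insert_of_mem huT) (Finset.mem_insert_of_mem hvT)
        rw [Finset.card_insert_of_notMem hxT] at hle
        omega
      have hmaps : ∀ w ∈ T, c s(x, w) ∈ colAt c x := by
        intro w hw
        exact Finset.mem_image.mpr ⟨w, Finset.mem_erase.mpr
          ⟨fun hwx => hxT (hwx ▸ hw), mem_univ _⟩, rfl⟩
      have hcardle : T.card ≤ (colAt c x).card :=
        Finset.card_le_card_of_injOn _ hmaps hinj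
      have h1 : (Vc c k).card ≤ T.card := Finset.card_le_card hVcT
      have h2 : 3 * p x ≤ n := hpn x
      have h3 : (colAt c x).card ≤ p x := hd x
      omega
    -- counting argument
    have hEk : ∀ k ∈ usedC c,
        3 * ((Vc c k).card * ((Vc c k).card - 1)) ≤ 6 + 2 * n * ((Vc c k).card - 2) := by
      intro k hk
      have h2 : 2 ≤ (Vc c k).card := two_le_Vc_card hk
      have h3 : 3 * (Vc c k).card ≤ n := hsmall k hk
      set a := (Vc c k).card with ha
      rcases eq_or_lt_of_le h2 with h | h
      · rw [← h]; norm_num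
      · have h3a : 3 ≤ a := h
        have hc1 : 3 * (a * (a - 1)) = (3 * a) * (a - 1) := by ring
        have hc2 : (3 * a) * (a - 1) ≤ n * (a - 1) := Nat.mul_le_mul_right _ h3
        have hc3 : n * (a - 1) ≤ n * (2 * (a - 2)) := Nat.mul_le_mul_left _ (by omega)
        have hc4 : n * (2 * (a - 2)) = 2 * n * (a - 2) := by ring
        omega
    have hsum1 : 3 * (n * (n - 1)) ≤ ∑ k ∈ usedC c, 3 * ((Vc c k).card * ((Vc c k).card - 1)) := by
      rw [← Finset.mul_sum]
      exact Nat.mul_le_mul_left 3 (offdiag_le c)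
    have hsum2 : ∑ k ∈ usedC c, 3 * ((Vc c k).card * ((Vc c k).card - 1))
        ≤ 6 * (usedC c).card + 2 * n * ∑ k ∈ usedC c, ((Vc c k).card - 2) := by
      calc ∑ k ∈ usedC c, 3 * ((Vc c k).card * ((Vc c k).card - 1))
          ≤ ∑ k ∈ usedC c, (6 + 2 * n * ((Vc c k).card - 2)) := Finset.sum_le_sum hEk
        _ = 6 * (usedC c).card + 2 * n * ∑ k ∈ usedC c, ((Vc c k).card - 2) := by
            rw [Finset.sum_add_distrib, Finset.sum_const, ← Finset.mul_sum]
            simp [mul_comm]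
    have h2m : 2 * (usedC c).card ≤ ∑ k ∈ usedC c, (Vc c k).card := by
      calc 2 * (usedC c).card = ∑ _k ∈ usedC c, 2 := by rw [Finset.sum_const]; ring
        _ ≤ _ := Finset.sum_le_sum fun k hk => two_le_Vc_card hk
    have hS1p : ∑ k ∈ usedC c, (Vc c k).card ≤ ∑ v, p v := by
      rw [← sum_colAt_card]
      exact Finset.sum_le_sum fun v _ => hd v
    have h3p : 3 * ∑ v, p v ≤ n * n := by
      calc 3 * ∑ v, p v = ∑ v, 3 * p v := by rw [Finset.mul_sum]
        _ ≤ ∑ _v : Fin n, n := Finset.sum_le_sum fun v _ => hpn v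
        _ = n * n := by simp [Finset.sum_const, Finset.card_univ, mul_comm]
    -- combine
    set X := ∑ k ∈ usedC c, ((Vc c k).card - 2) with hX
    rcases Nat.eq_zero_or_pos n with h0 | h1
    · omega
    have hfin : n * (3 * (n - 1)) ≤ n * (n + 2 * X) := by
      have e1 : n * (3 * (n - 1)) = 3 * (n * (n - 1)) := by ring
      have e2 : n * (n + 2 * X) = n * n + 2 * n * X := by ring
      omega
    have := Nat.le_of_mul_le_mul_left hfin h1
    omega

end ARAux

/-- **Lemma 2.** -/
theorem colorCount_le_of_bounded_local_colors (n : ℕ) (p : Fin n → ℕ)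
    (hp1 : ∀ i, 1 ≤ p i) (hmono : Monotone p) (hpn : ∀ i, 3 * p i ≤ n)
    (c : Sym2 (Fin n) → ℕ)
    (hd : ∀ i : Fin n, ((fun j => c s(i, j)) '' {j | j ≠ i}).ncard ≤ p i) :
    (colorCount c : ℝ) ≤ (((∑ i, p i : ℕ) : ℝ) - (n : ℝ)) / 2 + 1 := by
  classical
  open ARAux in
  have hdv : ∀ v, (ARAux.colAt c v).card ≤ p v := by
    intro v
    have h := hd v
    have h1 : {j : Fin n | j ≠ v} = ↑(((univ : Finset (Fin n))).erase v) := by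
      ext j; simp
    rw [h1, ← Finset.coe_image, Set.ncard_coe_finset] at h
    exact h
  have hX : n - 2 ≤ ∑ k ∈ ARAux.usedC c, ((ARAux.Vc c k).card - 2) :=
    ARAux.key c p hpn hdv
  have hsplit : ∑ k ∈ ARAux.usedC c, (ARAux.Vc c k).card
      = (∑ k ∈ ARAux.usedC c, ((ARAux.Vc c k).card - 2)) + 2 * (ARAux.usedC c).card := by
    calc ∑ k ∈ ARAux.usedC c, (ARAux.Vc c k).card
        = ∑ k ∈ ARAux.usedC c, (((ARAux.Vc c k).card - 2) + 2) := by
          refine Finset.sum_congr rfl fun k hk => ?_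
          have := ARAux.two_le_Vc_card hk
          omega
      _ = _ := by rw [Finset.sum_add_distrib, Finset.sum_const]; ring_nf
  have hP : ∑ k ∈ ARAux.usedC c, (ARAux.Vc c k).card ≤ ∑ v, p v := by
    rw [← ARAux.sum_colAt_card]
    exact Finset.sum_le_sum fun v _ => hdv v
  have hm : colorCount c = (ARAux.usedC c).card := ARAux.colorCount_eq c
  have hkey : 2 * (ARAux.usedC c).card + n ≤ (∑ v, p v) + 2 := by
    rcases Nat.lt_or_ge n 3 with hn | hn
    · rcases Nat.eq_zero_or_pos n with h0 | h1
      · subst h0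
        have : ARAux.usedC c = ∅ := by
          simp [ARAux.usedC]
        rw [this]
        simp
      · have := hp1 ⟨0, h1⟩
        have := hpn ⟨0, h1⟩
        omega
    · omega
  rw [hm]
  have hR : ((2 * (ARAux.usedC c).card + n : ℕ) : ℝ) ≤ (((∑ v, p v) + 2 : ℕ) : ℝ) := by
    exact_mod_cast hkey
  push_cast at hR ⊢
  linarith
end

section
/- Let s ≥ 1, k ≥ 1 and t_1, …, t_k ≥ 1 be integers, and set m = s + t_1 + … + t_k. Then the disjoint union of paths P_{2s} ∪ P_{2t_1+1} ∪ P_{2t_2+1} ∪ … ∪ P_{2t_k+1} is (isomorphic to) a subgraph of the disjoint union P_{2m−1} ∪ P_{2m−2}. -/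
open SimpleGraph Finset

/-- The linear forest `P_{p 0} ∪ ⋯ ∪ P_{p (k-1)}`; component `i` is a path on `p i` vertices. -/
def linearForest (k : ℕ) (p : Fin k → ℕ) : SimpleGraph (Σ i : Fin k, Fin (p i)) where
  Adj u v := u.1 = v.1 ∧ (u.2.val + 1 = v.2.val ∨ v.2.val + 1 = u.2.val)
  symm := by
    constructor
    rintro u v ⟨h1, h2⟩
    exact ⟨h1.symm, h2.symm⟩
  loopless := by constructor; rintro u ⟨-, h⟩; omega

/-!
Paths placed one after another along a longer path form a subgraph of it, so a linear forest
is contained in another one as soon as its paths can be distributed among the host paths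
without exceeding their orders. For `k ≥ 2`, put `P_{2s}` and any `⌈(k + 2 - 2s) / 3⌉` of the
odd paths into `P_{2m-1}` and the other odd paths into `P_{2m-2}`: every odd path has at least
three vertices and every `tᵢ ≥ 1`, which makes both counts fit. For `k = 1`, put `P_{2t₁+1}`
into `P_{2m-1}` and `P_{2s}` into `P_{2m-2}`.
-/

namespace linearForest

variable {n n' : ℕ} {p : Fin n → ℕ} {q : Fin n' → ℕ}

theorem isContained_of_sum_le (b : Fin n → Fin n')
    (hb : ∀ c, ∑ i with b i = c, p i ≤ q c) : linearForest n p ⊑ linearForest n' q := by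
  classical
  set offset : Fin n → ℕ := fun i => ∑ j ∈ Iio i with b j = b i, p j
  have offset_add : ∀ i, offset i + p i = ∑ j ∈ Iic i with b j = b i, p j := by
    intro i
    rw [← Iio_insert, filter_insert, if_pos rfl, sum_insert (by simp), add_comm]
  have fits : ∀ i, offset i + p i ≤ q (b i) := fun i =>
    (offset_add i).trans_le <| (sum_le_sum_of_subset (by gcongr; exact subset_univ _)).trans (hb _)
  have separated : ∀ i j, i < j → b i = b j → offset i + p i ≤ offset j := by
    intro i j hij hbij
    rw [offset_add]
    exact sum_le_sum_of_subset fun x => by simp [hbij]; omega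
  let f : (Σ i, Fin (p i)) → Σ c, Fin (q c) := fun x =>
    ⟨b x.1, offset x.1 + x.2, by have := fits x.1; omega⟩
  refine ⟨⟨⟨f, ?_⟩, ?_⟩⟩
  · rintro ⟨i, v⟩ ⟨j, w⟩ ⟨rfl, hvw⟩
    exact ⟨rfl, by dsimp only [f] at hvw ⊢; omega⟩
  · rintro ⟨i, v⟩ ⟨j, w⟩ hf
    have hb : b i = b j := congrArg Sigma.fst hf
    have hpos : offset i + v = offset j + w := congrArg (fun z : Σ c, Fin (q c) => (z.2 : ℕ)) hf
    obtain rfl : i = j := by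
      by_contra hne
      rcases lt_or_gt_of_ne hne with h | h
      · have := separated i j h hb; omega
      · have := separated j i h hb.symm; omega
    obtain rfl : v = w := Fin.ext (by omega)
    rfl

end linearForest

theorem Finset.sum_filter_fin_cons {k : ℕ} {β M : Type*} [DecidableEq β] [AddCommMonoid M]
    (a : M) (p : Fin k → M) (c₀ : β) (b : Fin k → β) (c : β) :
    ∑ i with (Fin.cons c₀ b : Fin (k + 1) → β) i = c, (Fin.cons a p : Fin (k + 1) → M) i =
      (if c₀ = c then a else 0) + ∑ j with b j = c, p j := by
  simp [sum_filter, Fin.sum_univ_succ]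

theorem exists_odd_paths_split_of_two_le {s k : ℕ} (hs : 1 ≤ s) (hk : 2 ≤ k) (t : Fin k → ℕ)
    (ht : ∀ i, 1 ≤ t i) :
    ∃ I : Finset (Fin k), 2 * s + ∑ j ∈ I, (2 * t j + 1) ≤ 2 * (s + ∑ j, t j) - 1 ∧
      ∑ j ∈ Iᶜ, (2 * t j + 1) ≤ 2 * (s + ∑ j, t j) - 2 := by
  -- `(k + 4 - 2 * s) / 3 = ⌈(k + 2 - 2s) / 3⌉`, read as `0` when `2s ≥ k + 2`
  obtain ⟨I, -, hI⟩ := exists_subset_card_eq (s := (univ : Finset (Fin k)))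
    (n := (k + 4 - 2 * s) / 3) (by simp; omega)
  refine ⟨I, ?_⟩
  have card_le_sum (J : Finset (Fin k)) : #J ≤ ∑ j ∈ J, t j := by
    simpa using J.card_nsmul_le_sum t 1 fun j _ => ht j
  have sum_odd (J : Finset (Fin k)) : ∑ j ∈ J, (2 * t j + 1) = 2 * ∑ j ∈ J, t j + #J := by
    simp [sum_add_distrib, mul_sum]
  have hsplit : ∑ j ∈ I, t j + ∑ j ∈ Iᶜ, t j = ∑ j, t j := sum_add_sum_compl I t
  have hI_le := card_le_sum I
  have hIc_le := card_le_sum Iᶜ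
  have hIc : #Iᶜ = k - #I := by simp [card_compl]
  rw [sum_odd, sum_odd]
  omega

theorem exists_assignment_to_two_paths {s k : ℕ} (hs : 1 ≤ s) (hk : 1 ≤ k) (t : Fin k → ℕ)
    (ht : ∀ i, 1 ≤ t i) :
    ∃ b : Fin (k + 1) → Fin 2, ∀ c, ∑ i with b i = c,
      (Fin.cons (2 * s) (fun j => 2 * t j + 1) : Fin (k + 1) → ℕ) i ≤
        ![2 * (s + ∑ j, t j) - 1, 2 * (s + ∑ j, t j) - 2] c := by
  rcases hk.eq_or_lt with rfl | hk
  · refine ⟨Fin.cons 1 fun _ => 0, ?_⟩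
    have := ht 0
    simp [Fin.forall_fin_two, sum_filter_fin_cons]
    omega
  · obtain ⟨I, h₀, h₁⟩ := exists_odd_paths_split_of_two_le hs hk t ht
    refine ⟨Fin.cons 0 fun j => if j ∈ I then 0 else 1, ?_⟩
    simpa [Fin.forall_fin_two, sum_filter_fin_cons, ← compl_filter] using ⟨h₀, h₁⟩

/-- **Claim (Section 3).** For `s ≥ 1`, `k ≥ 1`, `t₁, …, t_k ≥ 1` and `m = s + t₁ + ⋯ + t_k`,
the disjoint union `P_{2s} ∪ P_{2t₁+1} ∪ ⋯ ∪ P_{2t_k+1}` (given by the length function `P`)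
is a subgraph of `P_{2m-1} ∪ P_{2m-2}`: there is an injective map on vertices sending edges
to edges. -/
theorem paths_subgraph_two_long_paths (s k : ℕ) (hs : 1 ≤ s) (hk : 1 ≤ k)
    (t : Fin k → ℕ) (ht : ∀ i, 1 ≤ t i) (m : ℕ) (hm : m = s + ∑ i, t i)
    (P : Fin (k + 1) → ℕ) (hP : P = Fin.cons (2 * s) (fun j => 2 * t j + 1)) :
    ∃ f : (Σ i : Fin (k + 1), Fin (P i)) → (Σ i : Fin 2, Fin (![2 * m - 1, 2 * m - 2] i)),
      Function.Injective f ∧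
        ∀ u v : Σ i : Fin (k + 1), Fin (P i),
          (linearForest (k + 1) P).Adj u v →
            (linearForest 2 ![2 * m - 1, 2 * m - 2]).Adj (f u) (f v) := by
  subst hm hP
  obtain ⟨b, hb⟩ := exists_assignment_to_two_paths hs hk t ht
  obtain ⟨f⟩ := linearForest.isContained_of_sum_le b hb
  exact ⟨f, f.injective, fun _ _ => f.toHom.map_adj⟩
end
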